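/- (i) If (𝒞, 𝒟, ◁, ▷) is a matched pair, then in the Zappa–Szép product 𝒞 ⋈ 𝒟 every morphism factors uniquely as (a morphism in the image of ι_𝒟) composed with (a morphism in the image of ι_𝒞); i.e. [ι_𝒟(𝒟), ι_𝒞(𝒞)] is a strict factorisation system for 𝒞 ⋈ 𝒟. (ii) Conversely, let ℰ be a small category and let W_𝒟 and W_𝒞 be classes of morphisms of ℰ, each containing all identities and closed under composition (wide subcategories), such that every morphism e of ℰ admits a unique factorisation e = d ∘ c with d ∈ W_𝒟 and c ∈ W_𝒞. Regard W_𝒞 and W_𝒟 as categories with the objects of ℰ, and for c ∈ W_𝒞 and d ∈ W_𝒟 with source(c) = range(d), define c ◁ d ∈ W_𝒟 and c ▷ d ∈ W_𝒞 by the unique factorisation c ∘ d = (c ◁ d) ∘ (c ▷ d). Then (W_𝒞, W_𝒟, ◁, ▷) is a matched pair, and the map (d, c) ↦ d ∘ c is an isomorphism of categories W_𝒞 ⋈ W_𝒟 ≅ ℰ. -/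
import Mathlib


open CategoryTheory

universe v u

/-- A matched pair of small-category structures `C`, `D` on a common object type `V`.
A `C`-morphism `c : m ⟶ y` (source `m`, range `y`) and a `D`-morphism `d : z ⟶ m` determine
an object `w c d`, a `D`-morphism `c ◁ d : w c d ⟶ y` and a `C`-morphism `c ▷ d : z ⟶ w c d`.
Morphism equations across different intermediate objects are expressed with `HEq`. -/
structure MatchedPair (V : Type u) (C : Category.{v} V) (D : Category.{v} V) where
  w : ∀ {z m y : V}, C.Hom m y → D.Hom z m → V
  la : ∀ {z m y : V} (c : C.Hom m y) (d : D.Hom z m), D.Hom (w c d) y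
  ra : ∀ {z m y : V} (c : C.Hom m y) (d : D.Hom z m), C.Hom z (w c d)
  w_id_left : ∀ {z m : V} (d : D.Hom z m), w (C.id m) d = z
  la_id_left : ∀ {z m : V} (d : D.Hom z m), HEq (la (C.id m) d) d
  ra_id_left : ∀ {z m : V} (d : D.Hom z m), HEq (ra (C.id m) d) (C.id z)
  w_id_right : ∀ {m y : V} (c : C.Hom m y), w c (D.id m) = y
  la_id_right : ∀ {m y : V} (c : C.Hom m y), HEq (la c (D.id m)) (D.id y)
  ra_id_right : ∀ {m y : V} (c : C.Hom m y), HEq (ra c (D.id m)) c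
  w_comp_left : ∀ {z m k y : V} (c₁ : C.Hom k y) (c₂ : C.Hom m k) (d : D.Hom z m),
      w (C.comp c₂ c₁) d = w c₁ (la c₂ d)
  la_comp_left : ∀ {z m k y : V} (c₁ : C.Hom k y) (c₂ : C.Hom m k) (d : D.Hom z m),
      HEq (la (C.comp c₂ c₁) d) (la c₁ (la c₂ d))
  ra_comp_left : ∀ {z m k y : V} (c₁ : C.Hom k y) (c₂ : C.Hom m k) (d : D.Hom z m),
      HEq (ra (C.comp c₂ c₁) d) (C.comp (ra c₂ d) (ra c₁ (la c₂ d)))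
  w_comp_right : ∀ {z k m y : V} (c : C.Hom m y) (d₁ : D.Hom k m) (d₂ : D.Hom z k),
      w c (D.comp d₂ d₁) = w (ra c d₁) d₂
  la_comp_right : ∀ {z k m y : V} (c : C.Hom m y) (d₁ : D.Hom k m) (d₂ : D.Hom z k),
      HEq (la c (D.comp d₂ d₁)) (D.comp (la (ra c d₁) d₂) (la c d₁))
  ra_comp_right : ∀ {z k m y : V} (c : C.Hom m y) (d₁ : D.Hom k m) (d₂ : D.Hom z k),
      HEq (ra c (D.comp d₂ d₁)) (ra (ra c d₁) d₂)

namespace MatchedPair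

variable {V : Type u} {C D : Category.{v} V}

/-- Morphisms `z ⟶ y` of the Zappa–Szép product `𝒞 ⋈ 𝒟`: pairs `(d, c)` with
`c : z ⟶ m` a `𝒞`-morphism and `d : m ⟶ y` a `𝒟`-morphism. -/
def ZSHom (_M : MatchedPair V C D) (z y : V) : Type (max u v) := Σ m : V, D.Hom m y × C.Hom z m

/-- The identity `(id_x, id_x)` of `𝒞 ⋈ 𝒟` at `x`. -/
def zsId (M : MatchedPair V C D) (x : V) : M.ZSHom x x := ⟨x, (D.id x, C.id x)⟩

/-- Composition in `𝒞 ⋈ 𝒟`: `(d₁, c₁) ∘ (d₂, c₂) = (d₁ ∘ (c₁ ◁ d₂), (c₁ ▷ d₂) ∘ c₂)`. -/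
def zsComp (M : MatchedPair V C D) {z m y : V} (f : M.ZSHom m y) (g : M.ZSHom z m) : M.ZSHom z y :=
  ⟨M.w f.2.2 g.2.1, (D.comp (M.la f.2.2 g.2.1) f.2.1, C.comp g.2.2 (M.ra f.2.2 g.2.1))⟩

/-- The canonical embedding `ι_𝒞 : 𝒞 → 𝒞 ⋈ 𝒟`, `c ↦ (id_{range c}, c)`. -/
def iotaC (M : MatchedPair V C D) {z m : V} (c : C.Hom z m) : M.ZSHom z m := ⟨m, (D.id m, c)⟩

/-- The canonical embedding `ι_𝒟 : 𝒟 → 𝒞 ⋈ 𝒟`, `d ↦ (d, id_{source d})`. -/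
def iotaD (M : MatchedPair V C D) {m y : V} (d : D.Hom m y) : M.ZSHom m y := ⟨m, (d, C.id m)⟩

end MatchedPair

section ZSAux

variable {V : Type u} {C D : Category.{v} V}

theorem heq_comp_fst {w m y : V} (h : w = m)
    {a : D.Hom w m} {b : D.Hom m m} (hab : HEq a b) (d : D.Hom m y) :
    HEq (D.comp a d) (D.comp b d) := by
  subst h; cases eq_of_heq hab; rfl

theorem heq_comp_snd {z m w : V} (h : w = m)
    {a : C.Hom m w} {b : C.Hom m m} (hab : HEq a b) (c : C.Hom z m) :
    HEq (C.comp c a) (C.comp c b) := by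
  subst h; cases eq_of_heq hab; rfl

theorem MatchedPair.zshom_ext {M : MatchedPair V C D} {z y : V} {p q : M.ZSHom z y}
    (h1 : p.1 = q.1) (h2 : HEq p.2.1 q.2.1) (h3 : HEq p.2.2 q.2.2) : p = q := by
  obtain ⟨a, b, c⟩ := p
  obtain ⟨a', b', c'⟩ := q
  dsimp at h1 h2 h3
  subst h1
  cases eq_of_heq h2
  cases eq_of_heq h3
  rfl

theorem MatchedPair.zsComp_iota (M : MatchedPair V C D)
    {z m y : V} (d : D.Hom m y) (c : C.Hom z m) :
    M.zsComp (M.iotaD d) (M.iotaC c) = ⟨m, (d, c)⟩ := by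
  refine MatchedPair.zshom_ext (M.w_id_left (D.id m)) ?_ ?_
  · exact (heq_comp_fst (M.w_id_left (D.id m)) (M.la_id_left (D.id m)) d).trans
      (heq_of_eq (D.id_comp d))
  · exact (heq_comp_snd (M.w_id_left (D.id m)) (M.ra_id_left (D.id m)) c).trans
      (heq_of_eq (C.comp_id c))

end ZSAux

/-- The wide subcategory of a category `cE` determined by a class `W` of morphisms that
contains all identities and is closed under composition. -/
@[reducible]
def wideSubcat (E : Type u) (cE : Category.{v} E) (W : ∀ x y : E, Set (cE.Hom x y))
    (hid : ∀ x : E, cE.id x ∈ W x x)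
    (hcomp : ∀ {x y z : E} (f : cE.Hom x y) (g : cE.Hom y z),
      f ∈ W x y → g ∈ W y z → cE.comp f g ∈ W x z) :
    Category.{v} E where
  Hom x y := {f : cE.Hom x y // f ∈ W x y}
  id x := ⟨cE.id x, hid x⟩
  comp f g := ⟨cE.comp f.1 g.1, hcomp f.1 g.1 f.2 g.2⟩
  id_comp f := Subtype.ext (cE.id_comp f.1)
  comp_id f := Subtype.ext (cE.comp_id f.1)
  assoc f g h := Subtype.ext (cE.assoc f.1 g.1 h.1)

section Converse

variable {E : Type u} {cE : Category.{v} E} {WD WC : ∀ x y : E, Set (cE.Hom x y)}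

theorem sigma_triple_ext {x y : E}
    {p q : Σ m : E, cE.Hom x m × cE.Hom m y} (h : p = q) :
    p.1 = q.1 ∧ HEq p.2.1 q.2.1 ∧ HEq p.2.2 q.2.2 := by
  subst h; exact ⟨rfl, HEq.rfl, HEq.rfl⟩

theorem heq_sub_src (W : ∀ x y : E, Set (cE.Hom x y)) {k k' y : E} (hk : k = k')
    {a : cE.Hom k y} {b : cE.Hom k' y} (hab : HEq a b) (ha : a ∈ W k y) (hb : b ∈ W k' y) :
    HEq (⟨a, ha⟩ : {f : cE.Hom k y // f ∈ W k y}) (⟨b, hb⟩ : {f : cE.Hom k' y // f ∈ W k' y}) := by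
  subst hk; cases eq_of_heq hab; rfl

theorem heq_sub_tgt (W : ∀ x y : E, Set (cE.Hom x y)) {x k k' : E} (hk : k = k')
    {a : cE.Hom x k} {b : cE.Hom x k'} (hab : HEq a b) (ha : a ∈ W x k) (hb : b ∈ W x k') :
    HEq (⟨a, ha⟩ : {f : cE.Hom x k // f ∈ W x k}) (⟨b, hb⟩ : {f : cE.Hom x k' // f ∈ W x k'}) := by
  subst hk; cases eq_of_heq hab; rfl

variable (hfac : ∀ {x y : E} (e : cE.Hom x y),
    ∃! p : Σ m : E, cE.Hom x m × cE.Hom m y,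
      p.2.1 ∈ WC x p.1 ∧ p.2.2 ∈ WD p.1 y ∧ cE.comp p.2.1 p.2.2 = e)

/-- The chosen factorisation of a morphism. -/
noncomputable def fac {x y : E} (e : cE.Hom x y) : Σ m : E, cE.Hom x m × cE.Hom m y :=
  (hfac e).exists.choose

theorem fac_spec {x y : E} (e : cE.Hom x y) :
    (fac hfac e).2.1 ∈ WC x (fac hfac e).1 ∧ (fac hfac e).2.2 ∈ WD (fac hfac e).1 y ∧
      cE.comp (fac hfac e).2.1 (fac hfac e).2.2 = e :=
  (hfac e).exists.choose_spec

theorem fac_uniq {x y : E} (e : cE.Hom x y) {p : Σ m : E, cE.Hom x m × cE.Hom m y}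
    (hp : p.2.1 ∈ WC x p.1 ∧ p.2.2 ∈ WD p.1 y ∧ cE.comp p.2.1 p.2.2 = e) :
    p = fac hfac e :=
  (hfac e).unique hp (fac_spec hfac e)

theorem fac_eq {x y k : E} (c1 : cE.Hom x k) (d1 : cE.Hom k y)
    (hc : c1 ∈ WC x k) (hd : d1 ∈ WD k y) {e : cE.Hom x y} (h : cE.comp c1 d1 = e) :
    (fac hfac e).1 = k ∧ HEq (fac hfac e).2.1 c1 ∧ HEq (fac hfac e).2.2 d1 :=
  sigma_triple_ext (fac_uniq hfac e (p := ⟨k, c1, d1⟩) ⟨hc, hd, h⟩).symm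


theorem compLeftCalc {E : Type u} {cE : Category.{v} E} {WD WC : ∀ x y : E, Set (cE.Hom x y)}
    (hfac : ∀ {x y : E} (e : cE.Hom x y),
      ∃! p : Σ m : E, cE.Hom x m × cE.Hom m y,
        p.2.1 ∈ WC x p.1 ∧ p.2.2 ∈ WD p.1 y ∧ cE.comp p.2.1 p.2.2 = e)
    {z m k y : E} (c₁ : cE.Hom k y) (c₂ : cE.Hom m k) (d : cE.Hom z m) :
    cE.comp
      (cE.comp (fac hfac (cE.comp d c₂)).2.1
        (fac hfac (cE.comp (fac hfac (cE.comp d c₂)).2.2 c₁)).2.1)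
      (fac hfac (cE.comp (fac hfac (cE.comp d c₂)).2.2 c₁)).2.2 =
    cE.comp d (cE.comp c₂ c₁) := by
  rw [cE.assoc, (fac_spec hfac _).2.2, ← cE.assoc, (fac_spec hfac _).2.2, cE.assoc]

theorem compRightCalc {E : Type u} {cE : Category.{v} E} {WD WC : ∀ x y : E, Set (cE.Hom x y)}
    (hfac : ∀ {x y : E} (e : cE.Hom x y),
      ∃! p : Σ m : E, cE.Hom x m × cE.Hom m y,
        p.2.1 ∈ WC x p.1 ∧ p.2.2 ∈ WD p.1 y ∧ cE.comp p.2.1 p.2.2 = e)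
    {z k m y : E} (c : cE.Hom m y) (d₁ : cE.Hom k m) (d₂ : cE.Hom z k) :
    cE.comp (fac hfac (cE.comp d₂ (fac hfac (cE.comp d₁ c)).2.1)).2.1
      (cE.comp (fac hfac (cE.comp d₂ (fac hfac (cE.comp d₁ c)).2.1)).2.2
        (fac hfac (cE.comp d₁ c)).2.2) =
    cE.comp (cE.comp d₂ d₁) c := by
  rw [← cE.assoc, (fac_spec hfac _).2.2, cE.assoc, (fac_spec hfac _).2.2, ← cE.assoc]

variable (hidD : ∀ x : E, cE.id x ∈ WD x x)
  (hcompD : ∀ {x y z : E} (f : cE.Hom x y) (g : cE.Hom y z),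
      f ∈ WD x y → g ∈ WD y z → cE.comp f g ∈ WD x z)
  (hidC : ∀ x : E, cE.id x ∈ WC x x)
  (hcompC : ∀ {x y z : E} (f : cE.Hom x y) (g : cE.Hom y z),
      f ∈ WC x y → g ∈ WC y z → cE.comp f g ∈ WC x z)

/-- The matched pair structure induced by a strict factorisation system. -/
noncomputable def converseMP :
    MatchedPair E (wideSubcat E cE WC hidC @hcompC) (wideSubcat E cE WD hidD @hcompD) := by
  refine
    { w := fun {z m y} c d => (fac hfac (cE.comp d.1 c.1)).1
      la := fun {z m y} c d => ⟨(fac hfac (cE.comp d.1 c.1)).2.2, (fac_spec hfac _).2.1⟩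
      ra := fun {z m y} c d => ⟨(fac hfac (cE.comp d.1 c.1)).2.1, (fac_spec hfac _).1⟩
      w_id_left := ?_
      la_id_left := ?_
      ra_id_left := ?_
      w_id_right := ?_
      la_id_right := ?_
      ra_id_right := ?_
      w_comp_left := ?_
      la_comp_left := ?_
      ra_comp_left := ?_
      w_comp_right := ?_
      la_comp_right := ?_
      ra_comp_right := ?_ }
  case refine_1 =>
    intro z m d
    exact (fac_eq hfac (cE.id z) d.1 (hidC z) d.2
      (by show cE.comp (cE.id z) d.1 = cE.comp d.1 (cE.id m); rw [cE.id_comp, cE.comp_id])).1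
  case refine_2 =>
    intro z m d
    have h := fac_eq hfac (cE.id z) d.1 (hidC z) d.2
      (e := cE.comp d.1 (cE.id m))
      (by rw [cE.id_comp, cE.comp_id])
    exact heq_sub_src WD h.1 h.2.2 _ d.2
  case refine_3 =>
    intro z m d
    have h := fac_eq hfac (cE.id z) d.1 (hidC z) d.2
      (e := cE.comp d.1 (cE.id m))
      (by rw [cE.id_comp, cE.comp_id])
    exact heq_sub_tgt WC h.1 h.2.1 _ (hidC z)
  case refine_4 =>
    intro m y c
    exact (fac_eq hfac c.1 (cE.id y) c.2 (hidD y)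
      (by show cE.comp c.1 (cE.id y) = cE.comp (cE.id m) c.1; rw [cE.id_comp, cE.comp_id])).1
  case refine_5 =>
    intro m y c
    have h := fac_eq hfac c.1 (cE.id y) c.2 (hidD y)
      (e := cE.comp (cE.id m) c.1)
      (by rw [cE.id_comp, cE.comp_id])
    exact heq_sub_src WD h.1 h.2.2 _ (hidD y)
  case refine_6 =>
    intro m y c
    have h := fac_eq hfac c.1 (cE.id y) c.2 (hidD y)
      (e := cE.comp (cE.id m) c.1)
      (by rw [cE.id_comp, cE.comp_id])
    exact heq_sub_tgt WC h.1 h.2.1 _ c.2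
  case refine_7 =>
    intro z m k y c₁ c₂ d
    exact (fac_eq hfac
      (cE.comp (fac hfac (cE.comp d.1 c₂.1)).2.1
        (fac hfac (cE.comp (fac hfac (cE.comp d.1 c₂.1)).2.2 c₁.1)).2.1)
      (fac hfac (cE.comp (fac hfac (cE.comp d.1 c₂.1)).2.2 c₁.1)).2.2
      (hcompC _ _ (fac_spec hfac _).1 (fac_spec hfac _).1)
      (fac_spec hfac _).2.1
      (compLeftCalc hfac c₁.1 c₂.1 d.1)).1
  case refine_8 =>
    intro z m k y c₁ c₂ d
    have h := fac_eq hfac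
      (cE.comp (fac hfac (cE.comp d.1 c₂.1)).2.1
        (fac hfac (cE.comp (fac hfac (cE.comp d.1 c₂.1)).2.2 c₁.1)).2.1)
      (fac hfac (cE.comp (fac hfac (cE.comp d.1 c₂.1)).2.2 c₁.1)).2.2
      (hcompC _ _ (fac_spec hfac _).1 (fac_spec hfac _).1)
      (fac_spec hfac _).2.1
      (compLeftCalc hfac c₁.1 c₂.1 d.1)
    exact heq_sub_src WD h.1 h.2.2 _ (fac_spec hfac _).2.1
  case refine_9 =>
    intro z m k y c₁ c₂ d
    have h := fac_eq hfac
      (cE.comp (fac hfac (cE.comp d.1 c₂.1)).2.1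
        (fac hfac (cE.comp (fac hfac (cE.comp d.1 c₂.1)).2.2 c₁.1)).2.1)
      (fac hfac (cE.comp (fac hfac (cE.comp d.1 c₂.1)).2.2 c₁.1)).2.2
      (hcompC _ _ (fac_spec hfac _).1 (fac_spec hfac _).1)
      (fac_spec hfac _).2.1
      (compLeftCalc hfac c₁.1 c₂.1 d.1)
    exact heq_sub_tgt WC h.1 h.2.1 _ (hcompC _ _ (fac_spec hfac _).1 (fac_spec hfac _).1)
  case refine_10 =>
    intro z k m y c d₁ d₂
    exact (fac_eq hfac
      (fac hfac (cE.comp d₂.1 (fac hfac (cE.comp d₁.1 c.1)).2.1)).2.1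
      (cE.comp (fac hfac (cE.comp d₂.1 (fac hfac (cE.comp d₁.1 c.1)).2.1)).2.2
        (fac hfac (cE.comp d₁.1 c.1)).2.2)
      (fac_spec hfac _).1
      (hcompD _ _ (fac_spec hfac _).2.1 (fac_spec hfac _).2.1)
      (compRightCalc hfac c.1 d₁.1 d₂.1)).1
  case refine_11 =>
    intro z k m y c d₁ d₂
    have h := fac_eq hfac
      (fac hfac (cE.comp d₂.1 (fac hfac (cE.comp d₁.1 c.1)).2.1)).2.1
      (cE.comp (fac hfac (cE.comp d₂.1 (fac hfac (cE.comp d₁.1 c.1)).2.1)).2.2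
        (fac hfac (cE.comp d₁.1 c.1)).2.2)
      (fac_spec hfac _).1
      (hcompD _ _ (fac_spec hfac _).2.1 (fac_spec hfac _).2.1)
      (compRightCalc hfac c.1 d₁.1 d₂.1)
    exact heq_sub_src WD h.1 h.2.2 _ (hcompD _ _ (fac_spec hfac _).2.1 (fac_spec hfac _).2.1)
  case refine_12 =>
    intro z k m y c d₁ d₂
    have h := fac_eq hfac
      (fac hfac (cE.comp d₂.1 (fac hfac (cE.comp d₁.1 c.1)).2.1)).2.1
      (cE.comp (fac hfac (cE.comp d₂.1 (fac hfac (cE.comp d₁.1 c.1)).2.1)).2.2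
        (fac hfac (cE.comp d₁.1 c.1)).2.2)
      (fac_spec hfac _).1
      (hcompD _ _ (fac_spec hfac _).2.1 (fac_spec hfac _).2.1)
      (compRightCalc hfac c.1 d₁.1 d₂.1)
    exact heq_sub_tgt WC h.1 h.2.1 _ (fac_spec hfac _).1

end Converse

/-- (i) For a matched pair `(𝒞, 𝒟, ◁, ▷)`, every morphism of `𝒞 ⋈ 𝒟` factors uniquely as
`ι_𝒟(d) ∘ ι_𝒞(c)`, i.e. `[ι_𝒟(𝒟), ι_𝒞(𝒞)]` is a strict factorisation system for `𝒞 ⋈ 𝒟`.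
(ii) Conversely, if `ℰ` is a small category with wide subcategories `W_𝒟`, `W_𝒞` such that
every morphism factors uniquely as `e = d ∘ c` with `d ∈ W_𝒟`, `c ∈ W_𝒞`, then defining
`c ◁ d`, `c ▷ d` by `c ∘ d = (c ◁ d) ∘ (c ▷ d)` makes `(W_𝒞, W_𝒟)` a matched pair, and
`(d, c) ↦ d ∘ c` is an isomorphism of categories `W_𝒞 ⋈ W_𝒟 ≅ ℰ`. -/
theorem zappaSzep_strict_factorisation_system :
    -- (i)
    (∀ (V : Type u) (C D : Category.{v} V) (M : MatchedPair V C D) (z y : V)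
        (f : M.ZSHom z y),
      ∃! p : Σ m : V, D.Hom m y × C.Hom z m,
        f = M.zsComp (M.iotaD p.2.1) (M.iotaC p.2.2)) ∧
    -- (ii)
    (∀ (E : Type u) (cE : Category.{v} E) (WD WC : ∀ x y : E, Set (cE.Hom x y))
        (hidD : ∀ x : E, cE.id x ∈ WD x x)
        (hcompD : ∀ {x y z : E} (f : cE.Hom x y) (g : cE.Hom y z),
            f ∈ WD x y → g ∈ WD y z → cE.comp f g ∈ WD x z)
        (hidC : ∀ x : E, cE.id x ∈ WC x x)
        (hcompC : ∀ {x y z : E} (f : cE.Hom x y) (g : cE.Hom y z),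
            f ∈ WC x y → g ∈ WC y z → cE.comp f g ∈ WC x z),
      -- unique factorisation `e = d ∘ c`, `d ∈ W_𝒟`, `c ∈ W_𝒞` (here `c` is applied first):
      (∀ {x y : E} (e : cE.Hom x y),
        ∃! p : Σ m : E, cE.Hom x m × cE.Hom m y,
          p.2.1 ∈ WC x p.1 ∧ p.2.2 ∈ WD p.1 y ∧ cE.comp p.2.1 p.2.2 = e) →
      ∃ M : MatchedPair E (wideSubcat E cE WC hidC @hcompC) (wideSubcat E cE WD hidD @hcompD),
        -- the actions implement the factorisation `c ∘ d = (c ◁ d) ∘ (c ▷ d)`: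
        (∀ {z m y : E} (c : (wideSubcat E cE WC hidC @hcompC).Hom m y)
            (d : (wideSubcat E cE WD hidD @hcompD).Hom z m),
          cE.comp d.val c.val = cE.comp (M.ra c d).val (M.la c d).val) ∧
        -- `(d, c) ↦ d ∘ c` is an identity-on-objects functor `W_𝒞 ⋈ W_𝒟 ⥤ ℰ` ...
        (∀ x : E, cE.comp ((M.zsId x).2.2).val ((M.zsId x).2.1).val = cE.id x) ∧
        (∀ {z m y : E} (f : M.ZSHom m y) (g : M.ZSHom z m),
          cE.comp ((M.zsComp f g).2.2).val ((M.zsComp f g).2.1).val =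
            cE.comp (cE.comp (g.2.2).val (g.2.1).val) (cE.comp (f.2.2).val (f.2.1).val)) ∧
        -- ... which is bijective on hom-sets:
        (∀ z y : E, Function.Bijective
          (fun f : M.ZSHom z y => cE.comp (f.2.2).val (f.2.1).val))) := by
  constructor
  · -- (i)
    intro V C D M z y f
    refine ⟨f, ?_, ?_⟩
    · obtain ⟨m, d, c⟩ := f
      exact (M.zsComp_iota d c).symm
    · intro p hp
      exact (hp.trans (M.zsComp_iota p.2.1 p.2.2)).symm
  · -- (ii)
    intro E cE WD WC hidD hcompD hidC hcompC hfac
    refine ⟨converseMP @hfac hidD @hcompD hidC @hcompC, ?_, ?_, ?_, ?_⟩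
    · intro z m y c d
      exact ((fac_spec @hfac (cE.comp d.1 c.1)).2.2).symm
    · intro x
      exact cE.comp_id (cE.id x)
    · intro z m y f g
      obtain ⟨k, d₁, c₁⟩ := f
      obtain ⟨l, d₂, c₂⟩ := g
      show cE.comp (cE.comp c₂.1 (fac @hfac (cE.comp d₂.1 c₁.1)).2.1)
          (cE.comp (fac @hfac (cE.comp d₂.1 c₁.1)).2.2 d₁.1) =
        cE.comp (cE.comp c₂.1 d₂.1) (cE.comp c₁.1 d₁.1)
      have key : cE.comp (fac @hfac (cE.comp d₂.1 c₁.1)).2.1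
          (cE.comp (fac @hfac (cE.comp d₂.1 c₁.1)).2.2 d₁.1) =
          cE.comp d₂.1 (cE.comp c₁.1 d₁.1) := by
        rw [← cE.assoc, (fac_spec @hfac _).2.2, cE.assoc]
      rw [cE.assoc, key, ← cE.assoc]
    · intro z y
      constructor
      · intro f f' h
        obtain ⟨k, d₁, c₁⟩ := f
        obtain ⟨k', d₁', c₁'⟩ := f'
        have h1 : (⟨k, c₁.1, d₁.1⟩ : Σ m : E, cE.Hom z m × cE.Hom m y) =
            fac @hfac (cE.comp c₁'.1 d₁'.1) :=
          fac_uniq @hfac _ ⟨c₁.2, d₁.2, h⟩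
        have h2 : (⟨k', c₁'.1, d₁'.1⟩ : Σ m : E, cE.Hom z m × cE.Hom m y) =
            fac @hfac (cE.comp c₁'.1 d₁'.1) :=
          fac_uniq @hfac _ ⟨c₁'.2, d₁'.2, rfl⟩
        obtain ⟨hk, hc, hd⟩ := sigma_triple_ext (h1.trans h2.symm)
        dsimp at hk hc hd
        subst hk
        have hc' : c₁ = c₁' := Subtype.ext (eq_of_heq hc)
        have hd' : d₁ = d₁' := Subtype.ext (eq_of_heq hd)
        rw [hc', hd']
      · intro e
        refine ⟨⟨(fac @hfac e).1,
          (⟨(fac @hfac e).2.2, (fac_spec @hfac e).2.1⟩,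
           ⟨(fac @hfac e).2.1, (fac_spec @hfac e).1⟩)⟩, ?_⟩
        exact (fac_spec @hfac e).2.2
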